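/- arXiv:1503.07131 — 2 statements merged into one kernel-verified Lean document; each statement's English description precedes it below -/
import Mathlib

section
/- Let G be a connected bipartite simple graph with parts V_1 and V_2, and let γ : V(G) → R. Then there exists ω : E(G) → R whose sum over edges incident to each vertex v equals γ(v) if and only if Σ_{v∈V_1} γ(v) = Σ_{v∈V_2} γ(v). -/
/-!
A γ-flow is a solution of `M ω = γ`, where `M` is the vertex–edge incidence matrix. By the
Fredholm alternative such a solution exists iff `γ` is orthogonal to every `z` with `zᵀ M = 0`,
that is, to every `z` with `z u + z w = 0` along each edge. In a connected graph such a `z` is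
determined by its value at one vertex, so these `z` are the multiples of the sign vector `σ`
(`1` on `V₁`, `-1` on `V₁ᶜ`), and `σ ⬝ γ = ∑_{V₁} γ - ∑_{V₁ᶜ} γ`.
-/

open Finset Matrix

theorem Matrix.exists_mulVec_eq_iff_forall_vecMul_eq_zero {K m n : Type*} [Field K] [Fintype m]
    [DecidableEq m] [Fintype n] (A : Matrix m n K) (y : m → K) :
    (∃ x, A *ᵥ x = y) ↔ ∀ z, z ᵥ* A = 0 → z ⬝ᵥ y = 0 := by
  change y ∈ LinearMap.range A.mulVecLin ↔ _
  rw [← Subspace.dualAnnihilator_dualCoannihilator_eq (W := LinearMap.range A.mulVecLin),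
    Submodule.mem_dualCoannihilator, ← (dotProductEquiv K m).forall_congr_right]
  refine forall_congr' fun z => imp_congr ?_ Iff.rfl
  simp [Submodule.mem_dualAnnihilator, ← dotProduct_eq_zero_iff, dotProduct_mulVec]

namespace SimpleGraph

theorem Connected.mul_eq_mul_of_add_eq_zero {V R : Type*} [CommRing R] {G : SimpleGraph V}
    (hG : G.Connected) {f g : V → R} (hf : ∀ u w, G.Adj u w → f u + f w = 0)
    (hg : ∀ u w, G.Adj u w → g u + g w = 0) (u v : V) : f v * g u = f u * g v := by
  obtain ⟨p⟩ := hG u v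
  induction p with
  | nil => ring
  | @cons a b c hab _ ih => linear_combination -ih + f c * hg a b hab - g c * hf a b hab

variable {V : Type*} [Fintype V] [DecidableEq V] {G : SimpleGraph V} [DecidableRel G.Adj]

section Incidence

variable {R : Type*} [NonAssocSemiring R]

theorem incMatrix_mulVec_apply (ω : Sym2 V → R) (v : V) :
    (G.incMatrix R *ᵥ ω) v = ∑ e ∈ G.incidenceFinset v, ω e := by
  simp only [mulVec, dotProduct, incMatrix_apply', ite_mul, one_mul, zero_mul, ← sum_filter]
  congr 1
  ext
  simp

theorem vecMul_incMatrix_apply_of_adj (f : V → R) {u w : V} (h : G.Adj u w) :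
    (f ᵥ* G.incMatrix R) s(u, w) = f u + f w := by
  have hends : ({v | s(u, w) ∈ G.incidenceSet v} : Finset V) = {u, w} := by
    ext
    simp [incidenceSet, h, Sym2.mem_iff]
  simp only [vecMul, dotProduct, incMatrix_apply', mul_ite, mul_one, mul_zero, ← sum_filter,
    hends, sum_pair h.ne]

theorem vecMul_incMatrix_eq_zero_iff (f : V → R) :
    f ᵥ* G.incMatrix R = 0 ↔ ∀ u w, G.Adj u w → f u + f w = 0 := by
  refine ⟨fun h u w huw => ?_, fun h => funext fun e => ?_⟩
  · rw [← vecMul_incMatrix_apply_of_adj f huw, h, Pi.zero_apply]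
  · induction e with
    | _ u w =>
      by_cases huw : G.Adj u w
      · rw [vecMul_incMatrix_apply_of_adj f huw, h u w huw, Pi.zero_apply]
      · simp [vecMul, dotProduct, incMatrix_apply', incidenceSet, huw]

end Incidence

theorem Connected.exists_incMatrix_mulVec_eq_iff {K : Type*} [Field K] (hG : G.Connected)
    {σ : V → K} (hσ : ∀ u w, G.Adj u w → σ u + σ w = 0) {u : V} (hu : σ u ≠ 0) (γ : V → K) :
    (∃ ω, G.incMatrix K *ᵥ ω = γ) ↔ σ ⬝ᵥ γ = 0 := by
  rw [exists_mulVec_eq_iff_forall_vecMul_eq_zero]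
  refine ⟨fun h => h σ ((vecMul_incMatrix_eq_zero_iff σ).2 hσ), fun h z hz => ?_⟩
  have hzσ : z = (z u / σ u) • σ := funext fun v => by
    rw [Pi.smul_apply, smul_eq_mul, div_mul_eq_mul_div, eq_div_iff hu,
      hG.mul_eq_mul_of_add_eq_zero ((vecMul_incMatrix_eq_zero_iff z).1 hz) hσ]
  rw [hzσ, smul_dotProduct, h, smul_zero]

end SimpleGraph

/-- A connected bipartite simple graph with parts `V₁`, `V₁ᶜ` admits a `γ`-ℝ-flow if and only
if the sums of `γ` over the two parts agree. -/
theorem stmt_6 {V : Type*} [Fintype V] [DecidableEq V] (G : SimpleGraph V) [DecidableRel G.Adj]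
    (V₁ : Finset V) (hconn : G.Connected)
    (hbip : ∀ u w, G.Adj u w → (u ∈ V₁ ↔ w ∉ V₁)) (γ : V → ℝ) :
    (∃ ω : Sym2 V → ℝ, ∀ v, ∑ e ∈ G.incidenceFinset v, ω e = γ v) ↔
      ∑ v ∈ V₁, γ v = ∑ v ∈ V₁ᶜ, γ v := by
  set σ : V → ℝ := fun v => if v ∈ V₁ then 1 else -1
  have hσ : ∀ u w, G.Adj u w → σ u + σ w = 0 := fun u w huw => by
    by_cases hw : w ∈ V₁ <;> simp [σ, hw, hbip u w huw]
  have hσ_ne : ∀ v, σ v ≠ 0 := fun v => by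
    dsimp only [σ]
    split_ifs <;> norm_num
  have hσγ : σ ⬝ᵥ γ = ∑ v ∈ V₁, γ v - ∑ v ∈ V₁ᶜ, γ v := by
    rw [dotProduct, ← sum_add_sum_compl V₁, sub_eq_add_neg, ← sum_neg_distrib]
    congr 1 <;> refine sum_congr rfl fun v hv => ?_ <;> simp_all [σ]
  obtain ⟨v₀⟩ := hconn.nonempty
  have hflow := hconn.exists_incMatrix_mulVec_eq_iff hσ (hσ_ne v₀) γ
  simp only [funext_iff, SimpleGraph.incMatrix_mulVec_apply] at hflow
  rw [hflow, hσγ, sub_eq_zero]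
end

section
/- Let G be a bipartite graph. Then G admits a 1-sum flow with all values in [0,1] if and only if G has a perfect matching. -/
/-!
A perfect matching's indicator is a 1-sum `[0,1]`-flow. Conversely, for any graph with a
nonnegative 1-sum flow `ω` and any vertex set `S`, `|S| = ∑_{v ∈ S} ∑_{w ~ v} ω(vw)`; every pair
`(v, w)` occurring here reappears as `(w, v)` in the analogous sum over `N(S)`, which equals
`|N(S)|`. So Hall's condition `|S| ≤ |N(S)|` holds for all `S`, and for a bipartite graph Hall's
marriage theorem yields a perfect matching.
-/

open Finset

namespace SimpleGraph

variable {V : Type*} [DecidableEq V] {G : SimpleGraph V} [G.LocallyFinite]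

theorem sum_incidenceFinset_eq_sum_neighborFinset {M : Type*} [AddCommMonoid M]
    (f : Sym2 V → M) (v : V) :
    ∑ e ∈ G.incidenceFinset v, f e = ∑ w ∈ G.neighborFinset v, f s(v, w) := by
  refine (sum_nbij (fun w => s(v, w)) ?_ ?_ ?_ fun _ _ => rfl).symm
  · intro w hw
    simpa [incidenceSet] using hw
  · intro w _ w' _ h
    exact Sym2.congr_right.1 h
  · intro e he
    simp only [coe_incidenceFinset] at he
    refine ⟨Sym2.Mem.other he.2, ?_, Sym2.other_spec he.2⟩
    simpa [← mem_edgeSet, Sym2.other_spec he.2] using he.1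

theorem card_le_card_biUnion_neighborFinset_of_sum_incidenceFinset_eq_one {ω : Sym2 V → ℝ}
    (hω : ∀ e ∈ G.edgeSet, 0 ≤ ω e) (hsum : ∀ v, ∑ e ∈ G.incidenceFinset v, ω e = 1)
    (s : Finset V) : #s ≤ #(s.biUnion fun v => G.neighborFinset v) := by
  have hcard (t : Finset V) : (#t : ℝ) = ∑ v ∈ t, ∑ w ∈ G.neighborFinset v, ω s(v, w) := by
    simp [← sum_incidenceFinset_eq_sum_neighborFinset, hsum]
  have key : (#s : ℝ) ≤ #(s.biUnion fun v => G.neighborFinset v) := by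
    rw [hcard, hcard, sum_comm' (t' := s.biUnion fun v => G.neighborFinset v)
      (s' := fun w => {v ∈ G.neighborFinset w | v ∈ s})]
    · refine sum_le_sum fun w _ => ?_
      calc ∑ v ∈ G.neighborFinset w with v ∈ s, ω s(v, w)
          = ∑ v ∈ G.neighborFinset w with v ∈ s, ω s(w, v) :=
            sum_congr rfl fun _ _ => by rw [Sym2.eq_swap]
        _ ≤ ∑ v ∈ G.neighborFinset w, ω s(w, v) :=
          sum_le_sum_of_subset_of_nonneg (filter_subset _ _) fun v hv _ =>
            hω _ ((mem_neighborFinset _ _ _).1 hv)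
    · intro v w
      simp only [mem_filter, mem_neighborFinset, mem_biUnion]
      exact ⟨fun h => ⟨⟨h.2.symm, h.1⟩, v, h⟩, fun h => ⟨h.1.2, h.1.1.symm⟩⟩
  exact_mod_cast key

theorem ncard_le_ncard_iUnion_neighborSet_of_sum_incidenceFinset_eq_one [Finite V]
    {ω : Sym2 V → ℝ}
    (hω : ∀ e ∈ G.edgeSet, 0 ≤ ω e) (hsum : ∀ v, ∑ e ∈ G.incidenceFinset v, ω e = 1)
    (s : Set V) : s.ncard ≤ (⋃ x ∈ s, G.neighborSet x).ncard := by
  have hs := s.toFinite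
  have : (⋃ x ∈ s, G.neighborSet x) = ↑(hs.toFinset.biUnion fun v => G.neighborFinset v) := by
    simp
  rw [this, Set.ncard_coe_finset, Set.ncard_eq_toFinset_card s hs]
  exact card_le_card_biUnion_neighborFinset_of_sum_incidenceFinset_eq_one hω hsum _

theorem Subgraph.IsPerfectMatching.sum_incidenceFinset_indicator {R : Type*}
    [AddCommMonoidWithOne R] {M : G.Subgraph} (hM : M.IsPerfectMatching) (v : V) :
    ∑ e ∈ G.incidenceFinset v, M.edgeSet.indicator (1 : Sym2 V → R) e = 1 := by
  obtain ⟨w, hw, huniq⟩ := hM.1 (hM.2 v)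
  rw [sum_incidenceFinset_eq_sum_neighborFinset, sum_eq_single w]
  · exact Set.indicator_of_mem (Subgraph.mem_edgeSet.2 hw) _
  · intro u _ hu
    exact Set.indicator_of_notMem (fun h => hu (huniq u (Subgraph.mem_edgeSet.1 h))) _
  · exact fun h => absurd ((mem_neighborFinset _ _ _).2 (M.adj_sub hw)) h

end SimpleGraph

/-- A bipartite graph admits a 1-sum `[0,1]`-flow if and only if it has a perfect matching. -/
theorem stmt_16 {V : Type*} [Fintype V] [DecidableEq V] (G : SimpleGraph V) [DecidableRel G.Adj]
    (hbip : G.Colorable 2) :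
    (∃ ω : Sym2 V → ℝ, (∀ e ∉ G.edgeSet, ω e = 0) ∧ (∀ e ∈ G.edgeSet, 0 ≤ ω e ∧ ω e ≤ 1) ∧
        ∀ v, ∑ e ∈ G.incidenceFinset v, ω e = 1) ↔
      ∃ M : G.Subgraph, M.IsPerfectMatching := by
  obtain ⟨p₁, p₂, hp⟩ := SimpleGraph.IsBipartite.exists_isBipartiteWith hbip
  constructor
  · rintro ⟨ω, -, hω, hsum⟩
    exact SimpleGraph.exists_isPerfectMatching_of_forall_ncard_le hp
      (SimpleGraph.ncard_le_ncard_iUnion_neighborSet_of_sum_incidenceFinset_eq_one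
        (fun e he => (hω e he).1) hsum)
  · rintro ⟨M, hM⟩
    refine ⟨M.edgeSet.indicator 1, fun e he => Set.indicator_of_notMem
      (fun h => he (M.edgeSet_subset h)) _, fun e _ => ?_, hM.sum_incidenceFinset_indicator⟩
    by_cases h : e ∈ M.edgeSet <;> simp [h]
end
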